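/- For n ≥ 1, p(n) = ∑_{m≥1} (-1)^{m+1} ( p(n - m(3m-1)/2) + p(n - m(3m+1)/2) ), where p of a negative integer is interpreted as 0. -/

import Mathlib

/-!
The generating function `∑ p(n) Xⁿ = ∏ₖ (1 - Xᵏ)⁻¹` times Euler's product `∏ₖ (1 - Xᵏ)` is `1`,
and by the pentagonal number theorem `∏ₖ (1 - Xᵏ) = ∑_{k ∈ ℤ} (-1)ᵏ X^{k(3k-1)/2}`. Comparing the
coefficients of `Xⁿ`, `n ≥ 1`, gives `∑_{k ∈ ℤ} (-1)ᵏ p(n - k(3k-1)/2) = 0`; pairing `k` with `-k`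
yields the recurrence.
-/

/-- The partition function extended by `0` to negative integers. -/
noncomputable def pInt (k : ℤ) : ℤ := if 0 ≤ k then (Nat.card (Nat.Partition k.toNat) : ℤ) else 0

open PowerSeries PowerSeries.WithPiTopology

theorem natAbs_le_pentagonal (k : ℤ) : k.natAbs ≤ pentagonal k := by
  have h := two_mul_natCast_pentagonal k
  zify
  rcases abs_cases k with ⟨hk, _⟩ | ⟨hk, _⟩ <;> rw [hk] <;> nlinarith

theorem natCast_pentagonal_neg (k : ℤ) : (pentagonal (-k) : ℤ) = k * (3 * k + 1) / 2 := by
  rw [natCast_pentagonal]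
  ring_nf

theorem HasSum.nat_add_one_add_neg_add_one {G : Type*} [AddCommGroup G] [TopologicalSpace G]
    [IsTopologicalAddGroup G] {f : ℤ → G} {a : G} (hf : HasSum f a) :
    HasSum (fun m : ℕ ↦ f ↑(m + 1) + f (-↑(m + 1))) (a - f 0) := by
  convert (hasSum_nat_add_iff' 1).mpr hf.nat_add_neg using 1
  simp only [Finset.sum_range_one, Nat.cast_zero, neg_zero]
  abel

theorem Nat.Partition.powerSeriesMk_card_mul_pentagonalSeries (R : Type*) [CommRing R] :
    PowerSeries.mk (fun n ↦ (Fintype.card n.Partition : R)) * pentagonalSeries R = 1 := by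
  let _ : TopologicalSpace R := ⊥
  have _ : DiscreteTopology R := ⟨rfl⟩
  have hP : HasProd (fun i ↦ ∑' j : ℕ, ((X : R⟦X⟧) ^ (i + 1)) ^ j)
      (PowerSeries.mk fun n ↦ (Fintype.card n.Partition : R)) := by
    simpa [restricted, pow_mul] using hasProd_powerSeriesMk_card_restricted R (fun _ ↦ True)
  refine (hP.mul (hasProd_one_sub_X_pow R)).unique ?_
  convert hasProd_one with i
  exact tsum_pow_mul_one_sub_of_constantCoeff_eq_zero (by simp)

theorem pInt_eq_zero_of_neg {k : ℤ} (hk : k < 0) : pInt k = 0 := if_neg hk.not_ge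

theorem coeff_powerSeriesMk_card_partition_mul_X_pow (n m : ℕ) :
    coeff n (PowerSeries.mk (fun n ↦ (Fintype.card n.Partition : ℤ)) * X ^ m) = pInt (n - m) := by
  rw [coeff_mul_X_pow', pInt]
  split_ifs <;> first | omega | simp [Nat.card_eq_fintype_card]

theorem hasSum_negOnePow_mul_pInt_sub_pentagonal (n : ℕ) :
    HasSum (fun k : ℤ ↦ (k.negOnePow : ℤ) * pInt (n - pentagonal k)) (if n = 0 then 1 else 0) := by
  have h := ((hasSum_pentagonalSeries ℤ).mul_left
    (PowerSeries.mk (fun n ↦ (Fintype.card n.Partition : ℤ)))).map (coeff n) (continuous_coeff ℤ n)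
  rw [Nat.Partition.powerSeriesMk_card_mul_pentagonalSeries, coeff_one] at h
  convert h using 2 with k
  rw [Function.comp_apply, mul_left_comm, ← map_intCast (C (R := ℤ)), coeff_C_mul,
    coeff_powerSeriesMk_card_partition_mul_X_pow, Int.cast_id]

theorem pentagonal_recurrence (n : ℕ) (hn : 1 ≤ n) :
    pInt n = ∑ m ∈ Finset.Icc 1 n,
      (-1 : ℤ) ^ (m + 1) *
        (pInt ((n : ℤ) - m * (3 * m - 1) / 2) + pInt ((n : ℤ) - m * (3 * m + 1) / 2)) := by
  set T : ℕ → ℤ := fun m ↦ (-1 : ℤ) ^ (m + 1) *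
    (pInt ((n : ℤ) - m * (3 * m - 1) / 2) + pInt ((n : ℤ) - m * (3 * m + 1) / 2))
  set g : ℤ → ℤ := fun k ↦ (k.negOnePow : ℤ) * pInt (n - pentagonal k)
  have hg : HasSum g (if n = 0 then 1 else 0) := hasSum_negOnePow_mul_pInt_sub_pentagonal n
  have hg0 : g 0 = pInt n := by simp [g, pentagonal_def]
  have hsum := hg.nat_add_one_add_neg_add_one
  rw [if_neg (Nat.one_le_iff_ne_zero.mp hn), zero_sub, hg0] at hsum
  have hvanish : ∀ m ∉ Finset.range n, g ↑(m + 1) + g (-↑(m + 1)) = 0 := by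
    intro m hm
    have hlt (k : ℤ) (hk : n < k.natAbs) : g k = 0 := by
      have := natAbs_le_pentagonal k
      simp only [g, pInt_eq_zero_of_neg (by omega : (n : ℤ) - pentagonal k < 0), mul_zero]
    rw [Finset.mem_range, not_lt] at hm
    rw [hlt _ (by omega), hlt _ (by omega), add_zero]
  have hterm (m : ℕ) : g m + g (-m) = -T m := by
    simp only [g, T]
    rw [Int.negOnePow_neg, natCast_pentagonal_neg, natCast_pentagonal, Int.coe_negOnePow_natCast]
    ring
  rw [← neg_eq_iff_eq_neg.mpr ((hasSum_sum_of_ne_finset_zero hvanish).unique hsum)]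
  simp only [hterm, Finset.sum_neg_distrib, neg_neg]
  rw [Finset.range_eq_Ico, Finset.sum_Ico_add', Finset.Ico_add_one_right_eq_Icc, zero_add]
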